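/- Let T and F be nonnegative n×n matrices with ρ(T) < 1, F ≠ 0, and T + F irreducible with Perron root r = ρ(T+F). Then ρ(F(I−T/r)^{-1}) = r. -/

import Mathlib

/-!
Write `A = T + F`. Perron–Frobenius theory for the irreducible matrix `A` gives positive vectors
`v`, `u` with `A v = r v` and `uᵀ A = r uᵀ`, and comparison with `A` gives `ρ(T) < r`. Hence
`S = T / r` has `ρ(S) < 1`, so `I - S` is invertible with nonnegative inverse. Since
`F = r (I - S) - (r I - A)`, the next-generation matrix `M = F (I - S)⁻¹` satisfies
`M w = r w` for `w = (I - S) v`, giving `r ≤ ρ(M)`, and `uᵀ M = r uᵀ`, which for `M ≥ 0` and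
`u > 0` gives `ρ(M) ≤ r`.

The Perron–Frobenius facts all rest on one consequence of Gelfand's formula: a vector `z ≥ 0`,
`z ≠ 0`, with `c z ≤ A z` forces `c ≤ ρ(A)`, since otherwise `(A / c)ᵏ → 0` while
`(A / c)ᵏ z ≥ z`.
-/

open Matrix Filter Topology

noncomputable def specRad {n : ℕ} (A : Matrix (Fin n) (Fin n) ℝ) : ℝ :=
  (spectralRadius ℂ (A.map Complex.ofReal)).toReal

def MatIrred {n : ℕ} (A : Matrix (Fin n) (Fin n) ℝ) : Prop :=
  ∀ i j, ∃ k : ℕ, 0 < k ∧ 0 < (A ^ k) i j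

def MatPrimitive {n : ℕ} (A : Matrix (Fin n) (Fin n) ℝ) : Prop :=
  ∃ k : ℕ, 0 < k ∧ ∀ i j, 0 < (A ^ k) i j

open scoped NNReal ENNReal

namespace spectrum

theorem spectralRadius_smul {𝕜 A : Type*} [NormedField 𝕜] [Ring A] [Algebra 𝕜 A] (k : 𝕜)
    (a : A) : spectralRadius 𝕜 (k • a) = ‖k‖₊ * spectralRadius 𝕜 a := by
  rcases eq_or_ne k 0 with rfl | hk
  · simp [spectralRadius_zero]
  rw [spectralRadius, spectralRadius, ← Units.val_mk0 hk, ← Units.smul_def,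
    unit_smul_eq_smul, ← Set.image_smul, iSup_image, ENNReal.mul_iSup]
  simp only [ENNReal.mul_iSup, Units.smul_def, smul_eq_mul, nnnorm_mul, ENNReal.coe_mul]

theorem spectralRadius_ne_top {𝕜 A : Type*} [NormedField 𝕜] [NormedRing A] [NormedAlgebra 𝕜 A]
    [CompleteSpace A] (a : A) : spectralRadius 𝕜 a ≠ ⊤ :=
  ne_top_of_le_ne_top (by finiteness) (spectralRadius_le_pow_nnnorm_pow_one_div 𝕜 a 0)

theorem tendsto_pow_atTop_nhds_zero_of_spectralRadius_lt_one {A : Type*} [NormedRing A]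
    [NormedAlgebra ℂ A] [CompleteSpace A] {a : A} (h : spectralRadius ℂ a < 1) :
    Tendsto (a ^ ·) atTop (𝓝 0) := by
  obtain ⟨q, hρq, hq1⟩ := ENNReal.lt_iff_exists_nnreal_btwn.1 h
  refine squeeze_zero_norm' ?_ (tendsto_pow_atTop_nhds_zero_of_lt_one q.2 (by exact_mod_cast hq1))
  filter_upwards [(pow_nnnorm_pow_one_div_tendsto_nhds_spectralRadius a).eventually_lt_const hρq,
    eventually_ge_atTop 1] with k hk hk1
  have hk0 : (k : ℝ) ≠ 0 := Nat.cast_ne_zero.2 (Nat.one_le_iff_ne_zero.1 hk1)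
  have : (‖a ^ k‖₊ : ℝ≥0∞) ≤ (q : ℝ≥0∞) ^ k :=
    calc (‖a ^ k‖₊ : ℝ≥0∞) = ((‖a ^ k‖₊ : ℝ≥0∞) ^ (1 / k : ℝ)) ^ k := by
          rw [← ENNReal.rpow_natCast, ← ENNReal.rpow_mul, one_div_mul_cancel hk0, ENNReal.rpow_one]
      _ ≤ (q : ℝ≥0∞) ^ k := pow_le_pow_left' hk.le k
  exact_mod_cast this

end spectrum

theorem Pi.exists_pos_smul_le {ι : Type*} [Finite ι] (w : ι → ℝ) {p : ι → ℝ}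
    (hp : ∀ i, 0 < p i) : ∃ δ : ℝ, 0 < δ ∧ δ • w ≤ p := by
  have : ∀ᶠ δ in 𝓝[>] (0 : ℝ), ∀ i, δ * w i < p i :=
    nhdsWithin_le_nhds <| eventually_all.2 fun i =>
      ((continuous_mul_const (w i)).tendsto' 0 0 (zero_mul _)).eventually_lt_const (hp i)
  obtain ⟨δ, hδ, hδ0⟩ := (this.and self_mem_nhdsWithin).exists
  exact ⟨δ, hδ0, fun i => (hδ i).le⟩

namespace Matrix

variable {ι κ : Type*} [Fintype κ]

theorem mem_spectrum_iff_exists_mulVec_eq_smul {K : Type*} [Field K] [DecidableEq κ]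
    {M : Matrix κ κ K} {μ : K} : μ ∈ spectrum K M ↔ ∃ x ≠ 0, M *ᵥ x = μ • x := by
  rw [← spectrum_toLin', ← Module.End.hasEigenvalue_iff_mem_spectrum]
  constructor
  · intro h
    obtain ⟨x, hx⟩ := h.exists_hasEigenvector
    exact ⟨x, hx.2, by simpa using hx.apply_eq_smul⟩
  · rintro ⟨x, hx0, hx⟩
    exact Module.End.hasEigenvalue_of_hasEigenvector
      ⟨Module.End.mem_eigenspace_iff.2 (by simpa using hx), hx0⟩

theorem spectrum_transpose {K : Type*} [Field K] [DecidableEq κ] (M : Matrix κ κ K) :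
    spectrum K Mᵀ = spectrum K M := by
  ext μ
  simp only [mem_spectrum_iff_isRoot_charpoly, charpoly_transpose]

theorem pow_mulVec_eq_smul {R : Type*} [CommSemiring R] [DecidableEq κ] {A : Matrix κ κ R}
    {z : κ → R} {c : R} (h : A *ᵥ z = c • z) (k : ℕ) : (A ^ k) *ᵥ z = c ^ k • z := by
  induction k with
  | zero => simp
  | succ k ih => rw [pow_succ, ← mulVec_mulVec, h, mulVec_smul, ih, smul_smul, pow_succ']

section OrderedSemiring

variable {R : Type*} [Semiring R] [PartialOrder R] [IsOrderedRing R] {A B : Matrix ι κ R}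

theorem mulVec_mono_of_nonneg (hA : ∀ i j, 0 ≤ A i j) {u v : κ → R} (h : u ≤ v) :
    A *ᵥ u ≤ A *ᵥ v :=
  fun i => dotProduct_le_dotProduct_of_nonneg_left h (hA i)

theorem mulVec_nonneg_of_nonneg (hA : ∀ i j, 0 ≤ A i j) {v : κ → R} (hv : 0 ≤ v) :
    0 ≤ A *ᵥ v := by
  simpa using mulVec_mono_of_nonneg hA hv

theorem mulVec_le_mulVec_of_le (hAB : ∀ i j, A i j ≤ B i j) {v : κ → R} (hv : 0 ≤ v) :
    A *ᵥ v ≤ B *ᵥ v :=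
  fun i => dotProduct_le_dotProduct_of_nonneg_right (hAB i) hv

end OrderedSemiring

section StrictOrderedSemiring

variable {R : Type*} [Semiring R] [LinearOrder R] [IsStrictOrderedRing R] {A : Matrix ι κ R}

theorem dotProduct_pos_of_pos {u v : κ → R} (hu : ∀ i, 0 < u i) (hv : 0 ≤ v) (hv0 : v ≠ 0) :
    0 < u ⬝ᵥ v := by
  obtain ⟨j, hj⟩ := (Pi.lt_def.1 (hv.lt_of_ne' hv0)).2
  exact Finset.sum_pos' (fun i _ => mul_nonneg (hu i).le (hv i))
    ⟨j, Finset.mem_univ j, mul_pos (hu j) hj⟩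

theorem mulVec_pos_of_pos (hA : ∀ i j, 0 < A i j) {v : κ → R} (hv : 0 ≤ v) (hv0 : v ≠ 0)
    (i : ι) : 0 < (A *ᵥ v) i :=
  dotProduct_pos_of_pos (hA i) hv hv0

theorem eq_zero_of_mulVec_nonpos (hA : ∀ i j, 0 ≤ A i j) {v : κ → R} (hv : ∀ j, 0 < v j)
    (h : A *ᵥ v ≤ 0) : A = 0 := by
  ext i j
  refine le_antisymm (nonpos_of_mul_nonpos_left ?_ (hv j)) (hA i j)
  exact (Finset.single_le_sum (f := fun l => A i l * v l)
    (fun l _ => mul_nonneg (hA i l) (hv l).le) (Finset.mem_univ j)).trans (h i)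

end StrictOrderedSemiring

theorem norm_smul_le_mulVec_norm {A : Matrix κ κ ℝ} (hA : ∀ i j, 0 ≤ A i j) {x : κ → ℂ}
    {μ : ℂ} (h : A.map Complex.ofReal *ᵥ x = μ • x) : ‖μ‖ • (‖x ·‖) ≤ A *ᵥ (‖x ·‖) := fun i =>
  calc ‖μ‖ * ‖x i‖ = ‖(A.map Complex.ofReal *ᵥ x) i‖ := by
        rw [h, Pi.smul_apply, smul_eq_mul, norm_mul]
    _ = ‖∑ j, (A i j : ℂ) * x j‖ := rfl
    _ ≤ (A *ᵥ (‖x ·‖)) i := (norm_sum_le _ _).trans_eq <| by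
        simp [mulVec, dotProduct, abs_of_nonneg (hA i _)]

end Matrix

theorem smul_sub_inv_smul {K M : Type*} [Field K] [AddCommGroup M] [Module K M] {r : K}
    (hr : r ≠ 0) (x y : M) : r • (x - r⁻¹ • y) = r • x - y := by
  rw [smul_sub, smul_smul, mul_inv_cancel₀ hr, one_smul]

section NextGenerationMatrix

variable {ι K : Type*} [Fintype ι] [DecidableEq ι] [Field K]

noncomputable def nextGenMatrix (T F : Matrix ι ι K) (r : K) : Matrix ι ι K :=
  F * (1 - r⁻¹ • T)⁻¹

variable {T F : Matrix ι ι K} {r : K}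

theorem vecMul_nextGenMatrix (hr : r ≠ 0) (hdet : IsUnit (1 - r⁻¹ • T).det) {u : ι → K}
    (hu : u ᵥ* (T + F) = r • u) : u ᵥ* nextGenMatrix T F r = r • u := by
  have huF : u ᵥ* F = u ᵥ* (r • (1 - r⁻¹ • T)) := by
    rw [smul_sub_inv_smul hr, vecMul_sub, vecMul_smul, vecMul_one, ← hu, vecMul_add,
      add_sub_cancel_left]
  rw [nextGenMatrix, ← vecMul_vecMul, huF, vecMul_vecMul, smul_mul_assoc, mul_nonsing_inv _ hdet,
    vecMul_smul, vecMul_one]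

theorem nextGenMatrix_mulVec (hr : r ≠ 0) (hdet : IsUnit (1 - r⁻¹ • T).det) {v : ι → K}
    (hv : (T + F) *ᵥ v = r • v) :
    nextGenMatrix T F r *ᵥ ((1 - r⁻¹ • T) *ᵥ v) = r • ((1 - r⁻¹ • T) *ᵥ v) := by
  have hBw : (1 - r⁻¹ • T)⁻¹ *ᵥ ((1 - r⁻¹ • T) *ᵥ v) = v := by
    rw [mulVec_mulVec, nonsing_inv_mul _ hdet, one_mulVec]
  rw [nextGenMatrix, ← mulVec_mulVec, hBw, ← smul_mulVec, smul_sub_inv_smul hr, sub_mulVec,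
    smul_mulVec, one_mulVec, ← hv, add_mulVec, add_sub_cancel_left]

end NextGenerationMatrix

section SpectralRadius

variable {n : ℕ}

-- Any Banach algebra norm serves for Gelfand's formula; `specRad` itself does not depend on it.
attribute [local instance] Matrix.linftyOpNormedRing Matrix.linftyOpNormedAlgebra

theorem specRad_nonneg (A : Matrix (Fin n) (Fin n) ℝ) : 0 ≤ specRad A :=
  ENNReal.toReal_nonneg

theorem norm_le_specRad {A : Matrix (Fin n) (Fin n) ℝ} {μ : ℂ}
    (h : μ ∈ spectrum ℂ (A.map Complex.ofReal)) : ‖μ‖ ≤ specRad A :=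
  ENNReal.toReal_mono (spectrum.spectralRadius_ne_top _) <|
    le_iSup₂ (f := fun k (_ : k ∈ spectrum ℂ (A.map Complex.ofReal)) => (‖k‖₊ : ℝ≥0∞)) μ h

theorem specRad_le_of_forall_norm_le {A : Matrix (Fin n) (Fin n) ℝ} {c : ℝ} (hc : 0 ≤ c)
    (h : ∀ μ ∈ spectrum ℂ (A.map Complex.ofReal), ‖μ‖ ≤ c) : specRad A ≤ c :=
  ENNReal.toReal_le_of_le_ofReal hc <| iSup₂_le fun μ hμ => by
    rw [← enorm_eq_nnnorm, ← ofReal_norm]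
    exact ENNReal.ofReal_le_ofReal (h μ hμ)

theorem exists_norm_eq_specRad [Nonempty (Fin n)] (A : Matrix (Fin n) (Fin n) ℝ) :
    ∃ μ ∈ spectrum ℂ (A.map Complex.ofReal), ‖μ‖ = specRad A := by
  obtain ⟨μ, hμ, h⟩ := spectrum.exists_nnnorm_eq_spectralRadius (A.map Complex.ofReal)
  exact ⟨μ, hμ, by rw [specRad, ← h]; rfl⟩

theorem specRad_smul (c : ℝ) (A : Matrix (Fin n) (Fin n) ℝ) :
    specRad (c • A) = |c| * specRad A := by
  have : (c • A).map Complex.ofReal = (c : ℂ) • A.map Complex.ofReal := by ext; simp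
  rw [specRad, specRad, this, spectrum.spectralRadius_smul, ENNReal.toReal_mul]
  simp

theorem specRad_transpose (A : Matrix (Fin n) (Fin n) ℝ) : specRad Aᵀ = specRad A := by
  rw [specRad, specRad, spectralRadius, spectralRadius, transpose_map, spectrum_transpose]

theorem abs_le_specRad_of_mulVec_eq_smul {A : Matrix (Fin n) (Fin n) ℝ} {w : Fin n → ℝ}
    {c : ℝ} (hw : w ≠ 0) (h : A *ᵥ w = c • w) : |c| ≤ specRad A := by
  have hmem : (c : ℂ) ∈ spectrum ℂ (A.map Complex.ofReal) := by
    refine mem_spectrum_iff_exists_mulVec_eq_smul.2 ⟨(↑) ∘ w, ?_, ?_⟩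
    · simpa [funext_iff] using hw
    · ext i
      exact (RingHom.map_mulVec Complex.ofRealHom A w i).symm.trans (by simp [h])
  simpa using norm_le_specRad hmem

theorem exists_smul_specRad_le_mulVec [Nonempty (Fin n)] {A : Matrix (Fin n) (Fin n) ℝ}
    (hA : ∀ i j, 0 ≤ A i j) : ∃ z, 0 ≤ z ∧ z ≠ 0 ∧ specRad A • z ≤ A *ᵥ z := by
  obtain ⟨μ, hμ, hμA⟩ := exists_norm_eq_specRad A
  obtain ⟨x, hx0, hx⟩ := mem_spectrum_iff_exists_mulVec_eq_smul.1 hμ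
  refine ⟨(‖x ·‖), fun i => norm_nonneg _, ?_, hμA ▸ norm_smul_le_mulVec_norm hA hx⟩
  simpa [funext_iff] using hx0

theorem specRad_le_of_vecMul_le {A : Matrix (Fin n) (Fin n) ℝ} (hA : ∀ i j, 0 ≤ A i j)
    {u : Fin n → ℝ} (hu : ∀ i, 0 < u i) {c : ℝ} (hc : 0 ≤ c) (h : u ᵥ* A ≤ c • u) :
    specRad A ≤ c := by
  refine specRad_le_of_forall_norm_le hc fun μ hμ => ?_
  obtain ⟨x, hx0, hx⟩ := mem_spectrum_iff_exists_mulVec_eq_smul.1 hμ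
  have hz : 0 ≤ (‖x ·‖) := fun i => norm_nonneg _
  have huz : 0 < u ⬝ᵥ (‖x ·‖) :=
    dotProduct_pos_of_pos hu hz (by simpa [funext_iff] using hx0)
  refine le_of_mul_le_mul_right ?_ huz
  calc ‖μ‖ * (u ⬝ᵥ (‖x ·‖)) = u ⬝ᵥ (‖μ‖ • (‖x ·‖)) := by rw [dotProduct_smul, smul_eq_mul]
    _ ≤ u ⬝ᵥ (A *ᵥ (‖x ·‖)) :=
      dotProduct_le_dotProduct_of_nonneg_left (norm_smul_le_mulVec_norm hA hx) fun i => (hu i).le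
    _ = (u ᵥ* A) ⬝ᵥ (‖x ·‖) := dotProduct_mulVec _ _ _
    _ ≤ (c • u) ⬝ᵥ (‖x ·‖) := dotProduct_le_dotProduct_of_nonneg_right h hz
    _ = c * (u ⬝ᵥ (‖x ·‖)) := by rw [smul_dotProduct, smul_eq_mul]

theorem tendsto_pow_atTop_nhds_zero_of_specRad_lt_one {S : Matrix (Fin n) (Fin n) ℝ}
    (h : specRad S < 1) : Tendsto (S ^ ·) atTop (𝓝 0) := by
  have hC := spectrum.tendsto_pow_atTop_nhds_zero_of_spectralRadius_lt_one
    (a := S.map Complex.ofReal)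
    ((ENNReal.toReal_lt_toReal (spectrum.spectralRadius_ne_top _) ENNReal.one_ne_top).1 h)
  have hre : ∀ k : ℕ, ((S.map Complex.ofReal) ^ k).map Complex.re = S ^ k := fun k => by
    rw [show S.map Complex.ofReal = S.map Complex.ofRealHom from rfl, ← Matrix.map_pow]
    ext; simp
  simpa [Function.comp_def, hre] using
    ((continuous_id.matrix_map Complex.continuous_re).tendsto 0).comp hC

end SpectralRadius

section Nonneg

variable {n : ℕ}

theorem specRad_inv_smul_lt_one {A : Matrix (Fin n) (Fin n) ℝ} {c : ℝ} (h : specRad A < c) :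
    specRad (c⁻¹ • A) < 1 := by
  have hc := (specRad_nonneg A).trans_lt h
  rwa [specRad_smul, abs_of_pos (inv_pos.2 hc), inv_mul_lt_one₀ hc]

theorem le_specRad_of_smul_le_mulVec {A : Matrix (Fin n) (Fin n) ℝ} (hA : ∀ i j, 0 ≤ A i j)
    {z : Fin n → ℝ} (hz : 0 ≤ z) (hz0 : z ≠ 0) {c : ℝ} (h : c • z ≤ A *ᵥ z) :
    c ≤ specRad A := by
  by_contra! hlt
  have hc : 0 < c := (specRad_nonneg A).trans_lt hlt
  set S := c⁻¹ • A
  have hS : ∀ i j, 0 ≤ S i j := fun i j => mul_nonneg (inv_nonneg.2 hc.le) (hA i j)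
  have hSz : z ≤ S *ᵥ z :=
    calc z = c⁻¹ • (c • z) := (inv_smul_smul₀ hc.ne' z).symm
      _ ≤ c⁻¹ • (A *ᵥ z) := smul_le_smul_of_nonneg_left h (inv_nonneg.2 hc.le)
      _ = S *ᵥ z := (smul_mulVec _ _ _).symm
  have hSkz : ∀ k, z ≤ (S ^ k) *ᵥ z := by
    intro k
    induction k with
    | zero => simp
    | succ k ih =>
      calc z ≤ S *ᵥ z := hSz
        _ ≤ S *ᵥ ((S ^ k) *ᵥ z) := mulVec_mono_of_nonneg hS ih
        _ = (S ^ (k + 1)) *ᵥ z := by rw [mulVec_mulVec, pow_succ']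
  have hlim : Tendsto (fun k => (S ^ k) *ᵥ z) atTop (𝓝 0) :=
    ((continuous_id.matrix_mulVec continuous_const).tendsto' 0 0 (zero_mulVec z)).comp
      (tendsto_pow_atTop_nhds_zero_of_specRad_lt_one (specRad_inv_smul_lt_one hlt))
  obtain ⟨i, hi⟩ := (Pi.lt_def.1 (hz.lt_of_ne' hz0)).2
  exact hi.not_ge (ge_of_tendsto' (tendsto_pi_nhds.1 hlim i) fun k => hSkz k i)

theorem nonneg_of_one_sub_mulVec_nonneg {S : Matrix (Fin n) (Fin n) ℝ} (hS : ∀ i j, 0 ≤ S i j)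
    (hS1 : specRad S < 1) {b : Fin n → ℝ} (hb : 0 ≤ (1 - S) *ᵥ b) : 0 ≤ b := by
  rw [← negPart_eq_zero]
  by_contra hne
  refine hS1.not_ge (le_specRad_of_smul_le_mulVec hS (negPart_nonneg b) hne ?_)
  rw [one_smul]
  refine sup_le ?_ (mulVec_nonneg_of_nonneg hS (negPart_nonneg b))
  rw [sub_mulVec, one_mulVec, sub_nonneg] at hb
  calc -b ≤ S *ᵥ (-b) := by rw [mulVec_neg]; exact neg_le_neg hb
    _ ≤ S *ᵥ b⁻ := mulVec_mono_of_nonneg hS (neg_le_negPart b)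

theorem isUnit_one_sub {S : Matrix (Fin n) (Fin n) ℝ} (hS : ∀ i j, 0 ≤ S i j)
    (hS1 : specRad S < 1) : IsUnit (1 - S) := by
  refine mulVec_injective_iff_isUnit.1 fun x y hxy => ?_
  have hker : ∀ b, (1 - S) *ᵥ b = 0 → 0 ≤ b := fun b hb =>
    nonneg_of_one_sub_mulVec_nonneg hS hS1 hb.ge
  have hxy' : (1 - S) *ᵥ (x - y) = 0 := by rw [mulVec_sub, hxy, sub_self]
  refine sub_eq_zero.1 (le_antisymm ?_ (hker _ hxy'))
  simpa using hker (y - x) (by rw [← neg_sub x y, mulVec_neg, hxy', neg_zero])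

theorem one_sub_inv_apply_nonneg {S : Matrix (Fin n) (Fin n) ℝ} (hS : ∀ i j, 0 ≤ S i j)
    (hS1 : specRad S < 1) (i j : Fin n) : 0 ≤ (1 - S)⁻¹ i j := by
  have hdet := (isUnit_iff_isUnit_det _).1 (isUnit_one_sub hS hS1)
  simpa [mulVec_single_one] using nonneg_of_one_sub_mulVec_nonneg hS hS1
    (b := (1 - S)⁻¹ *ᵥ Pi.single j 1)
    (by rw [mulVec_mulVec, mul_nonsing_inv _ hdet, one_mulVec]; exact Pi.single_nonneg.2 zero_le_one) i

end Nonneg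

namespace MatIrred

variable {n : ℕ} {A : Matrix (Fin n) (Fin n) ℝ}

theorem transpose (h : MatIrred A) : MatIrred Aᵀ := fun i j => by
  obtain ⟨k, hk, hpos⟩ := h j i
  exact ⟨k, hk, by rwa [← transpose_pow]⟩

theorem exists_sum_pow_pos (h : MatIrred A) (hA : ∀ i j, 0 ≤ A i j) :
    ∃ N, ∀ i j, 0 < (∑ k ∈ Finset.range N, A ^ k) i j := by
  choose K _ hK using h
  refine ⟨Finset.univ.sup (fun p : Fin n × Fin n => K p.1 p.2) + 1, fun i j => ?_⟩
  rw [Matrix.sum_apply]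
  refine Finset.sum_pos' (fun k _ => pow_apply_nonneg hA k i j) ⟨K i j, ?_, hK i j⟩
  exact Finset.mem_range_succ_iff.2
    (Finset.le_sup (f := fun p : Fin n × Fin n => K p.1 p.2) (Finset.mem_univ (i, j)))

theorem pos_of_mulVec_eq_smul (h : MatIrred A) (hA : ∀ i j, 0 ≤ A i j) {z : Fin n → ℝ}
    (hz : 0 ≤ z) (hz0 : z ≠ 0) {c : ℝ} (hc : A *ᵥ z = c • z) (i : Fin n) : 0 < z i := by
  obtain ⟨j, hj⟩ := (Pi.lt_def.1 (hz.lt_of_ne' hz0)).2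
  obtain ⟨k, -, hk⟩ := h i j
  refine (hz i).lt_of_ne fun hzi => (mul_pos hk hj).not_ge ?_
  calc (A ^ k) i j * z j ≤ ((A ^ k) *ᵥ z) i :=
        Finset.single_le_sum (f := fun l => (A ^ k) i l * z l)
          (fun l _ => mul_nonneg (pow_apply_nonneg hA k i l) (hz l)) (Finset.mem_univ j)
    _ = 0 := by rw [pow_mulVec_eq_smul hc, Pi.smul_apply, ← hzi, Pi.zero_apply, smul_zero]

-- If `A z ≠ ρ(A) z`, then with `P = ∑ Aᵏ` entrywise positive, the positive vector `P z`
-- satisfies `(ρ(A) + δ) P z ≤ A (P z)` for some `δ > 0`.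
theorem mulVec_eq_of_smul_specRad_le (h : MatIrred A) (hA : ∀ i j, 0 ≤ A i j) {z : Fin n → ℝ}
    (hz : 0 ≤ z) (hz0 : z ≠ 0) (hsub : specRad A • z ≤ A *ᵥ z) : A *ᵥ z = specRad A • z := by
  obtain ⟨N, hP⟩ := h.exists_sum_pow_pos hA
  set P := ∑ k ∈ Finset.range N, A ^ k
  by_contra hne
  set y := A *ᵥ z - specRad A • z
  obtain ⟨δ, hδ, hδw⟩ := Pi.exists_pos_smul_le (P *ᵥ z)
    (mulVec_pos_of_pos hP (sub_nonneg.2 hsub) (sub_ne_zero.2 hne))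
  have hAP : A *ᵥ (P *ᵥ z) = specRad A • (P *ᵥ z) + P *ᵥ y := by
    have hcomm : Commute A P := Commute.sum_right _ _ _ fun k _ => (Commute.refl A).pow_right k
    rw [mulVec_mulVec, hcomm.eq, ← mulVec_mulVec, ← mulVec_smul, ← mulVec_add, add_sub_cancel]
  have hPz : 0 ≤ P *ᵥ z := mulVec_nonneg_of_nonneg (fun i j => (hP i j).le) hz
  have hPz0 : P *ᵥ z ≠ 0 := by
    obtain ⟨i, -⟩ := (Pi.lt_def.1 (hz.lt_of_ne' hz0)).2
    exact fun h0 => (mulVec_pos_of_pos hP hz hz0 i).ne' (congrFun h0 i)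
  have := le_specRad_of_smul_le_mulVec hA hPz hPz0 (c := specRad A + δ) <| by
    rw [hAP, add_smul]
    exact add_le_add le_rfl hδw
  linarith

theorem exists_pos_mulVec_eq_specRad_smul [Nonempty (Fin n)] (h : MatIrred A)
    (hA : ∀ i j, 0 ≤ A i j) : ∃ v : Fin n → ℝ, (∀ i, 0 < v i) ∧ A *ᵥ v = specRad A • v := by
  obtain ⟨z, hz, hz0, hsub⟩ := exists_smul_specRad_le_mulVec hA
  have heq := h.mulVec_eq_of_smul_specRad_le hA hz hz0 hsub
  exact ⟨z, h.pos_of_mulVec_eq_smul hA hz hz0 heq, heq⟩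

theorem exists_pos_vecMul_eq_specRad_smul [Nonempty (Fin n)] (h : MatIrred A)
    (hA : ∀ i j, 0 ≤ A i j) : ∃ u : Fin n → ℝ, (∀ i, 0 < u i) ∧ u ᵥ* A = specRad A • u := by
  simpa [mulVec_transpose, specRad_transpose] using
    h.transpose.exists_pos_mulVec_eq_specRad_smul fun i j => hA j i

theorem specRad_lt_of_le_of_ne [Nonempty (Fin n)] (h : MatIrred A)
    {T : Matrix (Fin n) (Fin n) ℝ} (hT : ∀ i j, 0 ≤ T i j) (hTA : ∀ i j, T i j ≤ A i j)
    (hne : T ≠ A) : specRad T < specRad A := by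
  have hA : ∀ i j, 0 ≤ A i j := fun i j => (hT i j).trans (hTA i j)
  by_contra! hle
  obtain ⟨z, hz, hz0, hsub⟩ := exists_smul_specRad_le_mulVec hT
  have hAz : specRad A • z ≤ T *ᵥ z := (smul_le_smul_of_nonneg_right hle hz).trans hsub
  have heq := h.mulVec_eq_of_smul_specRad_le hA hz hz0
    (hAz.trans (mulVec_le_mulVec_of_le hTA hz))
  have hpos := h.pos_of_mulVec_eq_smul hA hz hz0 heq
  refine hne (sub_eq_zero.1 ?_).symm
  refine eq_zero_of_mulVec_nonpos (fun i j => sub_nonneg.2 (hTA i j)) hpos ?_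
  rwa [sub_mulVec, heq, sub_nonpos]

end MatIrred

section NextGenerationSpectralRadius

variable {n : ℕ} {T F : Matrix (Fin n) (Fin n) ℝ} {r : ℝ}

theorem abs_le_specRad_nextGenMatrix (hr : r ≠ 0) (hdet : IsUnit (1 - r⁻¹ • T).det)
    {v : Fin n → ℝ} (hv0 : v ≠ 0) (hv : (T + F) *ᵥ v = r • v) :
    |r| ≤ specRad (nextGenMatrix T F r) := by
  refine abs_le_specRad_of_mulVec_eq_smul (fun hw => hv0 ?_) (nextGenMatrix_mulVec hr hdet hv)
  exact mulVec_injective_iff_isUnit.2 ((isUnit_iff_isUnit_det _).2 hdet)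
    (hw.trans (mulVec_zero _).symm)

theorem specRad_nextGenMatrix_le (hF : ∀ i j, 0 ≤ F i j) (hS : ∀ i j, 0 ≤ (r⁻¹ • T) i j)
    (hS1 : specRad (r⁻¹ • T) < 1) (hr : 0 < r) {u : Fin n → ℝ} (hu : ∀ i, 0 < u i)
    (huA : u ᵥ* (T + F) = r • u) : specRad (nextGenMatrix T F r) ≤ r := by
  have hdet := (isUnit_iff_isUnit_det _).1 (isUnit_one_sub hS hS1)
  refine specRad_le_of_vecMul_le (fun i j => ?_) hu hr.le
    (vecMul_nextGenMatrix hr.ne' hdet huA).le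
  exact Finset.sum_nonneg (s := Finset.univ) fun l _ =>
    mul_nonneg (hF i l) (one_sub_inv_apply_nonneg hS hS1 l j)

end NextGenerationSpectralRadius

theorem specRad_nextgen_at_perron_root_general {n : ℕ} (T F : Matrix (Fin n) (Fin n) ℝ)
    (hT : ∀ i j, 0 ≤ T i j) (hF : ∀ i j, 0 ≤ F i j)
    (hF0 : F ≠ 0) (hirr : MatIrred (T + F))
    (r : ℝ) (hr : r = specRad (T + F)) :
    specRad (F * (1 - r⁻¹ • T)⁻¹) = r := by
  obtain ⟨i₀, -⟩ : ∃ i j, F i j ≠ 0 := by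
    by_contra! h
    exact hF0 (ext h)
  have : Nonempty (Fin n) := ⟨i₀⟩
  have hA : ∀ i j, 0 ≤ (T + F) i j := fun i j => add_nonneg (hT i j) (hF i j)
  have hTr : specRad T < r := hr ▸ hirr.specRad_lt_of_le_of_ne hT
    (fun i j => le_add_of_nonneg_right (hF i j)) fun h => hF0 (by simpa using h)
  have hr0 : 0 < r := (specRad_nonneg T).trans_lt hTr
  have hS : ∀ i j, 0 ≤ (r⁻¹ • T) i j := fun i j => mul_nonneg (inv_nonneg.2 hr0.le) (hT i j)
  have hS1 : specRad (r⁻¹ • T) < 1 := specRad_inv_smul_lt_one hTr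
  obtain ⟨v, hv, hAv⟩ := hirr.exists_pos_mulVec_eq_specRad_smul hA
  obtain ⟨u, hu, huA⟩ := hirr.exists_pos_vecMul_eq_specRad_smul hA
  rw [← hr] at hAv huA
  change specRad (nextGenMatrix T F r) = r
  refine le_antisymm (specRad_nextGenMatrix_le hF hS hS1 hr0 hu huA) ?_
  have hdet := (isUnit_iff_isUnit_det _).1 (isUnit_one_sub hS hS1)
  simpa [abs_of_pos hr0] using abs_le_specRad_nextGenMatrix hr0.ne' hdet
    (fun h => (hv i₀).ne' (congrFun h i₀)) hAv

theorem specRad_nextgen_at_perron_root {n : ℕ} (T F : Matrix (Fin n) (Fin n) ℝ)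
    (hT : ∀ i j, 0 ≤ T i j) (hF : ∀ i j, 0 ≤ F i j)
    (hρ : specRad T < 1) (hF0 : F ≠ 0) (hirr : MatIrred (T + F))
    (r : ℝ) (hr : r = specRad (T + F)) :
    specRad (F * (1 - r⁻¹ • T)⁻¹) = r :=
  specRad_nextgen_at_perron_root_general T F hT hF hF0 hirr r hr
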